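/- Let f : S² → ℝ² be the continuous map f(x) = (dist(x, A), dist(x, B)) where A, B are nonempty subsets of the 2-sphere S²(r) ⊂ ℝ³. Then there exists x* ∈ S²(r) with f(x*) = f(−x*). -/

import Mathlib

/-!
This is the Borsuk–Ulam theorem for `S² → ℝ² = ℂ`, applied to `x ↦ dist(x, A) + dist(x, B) i`;
it suffices that an odd continuous `g` has a zero on the sphere. If not, pull `g` back along
spherical coordinates `(φ, θ) ↦ x(φ, θ)` and take a continuous logarithm `L` of it on the simply
connected plane. The winding `L(φ, θ + 2π) - L(φ, θ)` lies in `2πiℤ` and so does not depend on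
`(φ, θ)`; at the pole `φ = π/2` it vanishes. On the equator `φ = 0` oddness gives
`L(0, θ + π) - L(0, θ) ∈ πi + 2πiℤ`, again independent of `θ`, so the winding there is twice an odd
multiple of `πi`, a contradiction.
-/

open Complex Metric Real

theorem Complex.exists_continuous_exp_eq {A : Type*} [TopologicalSpace A] [SimplyConnectedSpace A]
    [LocallyPathConnectedSpace A] {f : A → ℂ} (hf : Continuous f) (hf₀ : ∀ a, f a ≠ 0) :
    ∃ L : A → ℂ, Continuous L ∧ ∀ a, exp (L a) = f a := by
  obtain ⟨a₀⟩ := PathConnectedSpace.nonempty (X := A)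
  obtain ⟨L, ⟨-, hL⟩, -⟩ := isCoveringMapOn_exp.existsUnique_continuousMap_lifts ⟨f, hf⟩
    (exp_log (hf₀ a₀)) hf₀
  exact ⟨L, L.continuous, congrFun hL⟩

theorem Complex.eq_of_continuous_of_exp_eq_const {X : Type*} [TopologicalSpace X]
    [PreconnectedSpace X] {φ : X → ℂ} (hφ : Continuous φ) {c : ℂ} (h : ∀ x, exp (φ x) = c)
    (x y : X) : φ x = φ y := by
  have hmem : ∀ z, φ z - φ x ∈ AddSubgroup.zmultiples (2 * π * I) := fun z ↦ by
    obtain ⟨n, hn⟩ := exp_eq_exp_iff_exists_int.mp ((h z).trans (h x).symm)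
    exact ⟨n, by simp only [zsmul_eq_mul, hn]; ring⟩
  have := PreconnectedSpace.constant (f := fun z ↦ (⟨φ z - φ x, hmem z⟩ :
    AddSubgroup.zmultiples (2 * π * I))) inferInstance (by fun_prop) (x := x) (y := y)
  simpa [eq_comm, sub_eq_zero] using congrArg Subtype.val this

noncomputable def sphericalPoint (r φ θ : ℝ) : EuclideanSpace ℝ (Fin 3) :=
  !₂[r * Real.cos φ * Real.cos θ, r * Real.cos φ * Real.sin θ, r * Real.sin φ]

theorem norm_sphericalPoint (r φ θ : ℝ) : ‖sphericalPoint r φ θ‖ = |r| := by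
  rw [EuclideanSpace.norm_eq, Fin.sum_univ_three, ← Real.sqrt_sq_eq_abs]
  congr 1
  simp only [sphericalPoint, Real.norm_eq_abs, sq_abs, Fin.isValue, Matrix.cons_val_zero,
    Matrix.cons_val_one, Matrix.cons_val]
  linear_combination
    r ^ 2 * Real.cos φ ^ 2 * Real.sin_sq_add_cos_sq θ + r ^ 2 * Real.sin_sq_add_cos_sq φ

theorem continuous_sphericalPoint (r : ℝ) :
    Continuous fun p : ℝ × ℝ ↦ sphericalPoint r p.1 p.2 := by
  unfold sphericalPoint
  fun_prop

theorem sphericalPoint_add_two_pi (r φ θ : ℝ) :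
    sphericalPoint r φ (θ + 2 * π) = sphericalPoint r φ θ := by
  simp [sphericalPoint]

theorem sphericalPoint_pi_div_two (r θ θ' : ℝ) :
    sphericalPoint r (π / 2) θ = sphericalPoint r (π / 2) θ' := by
  simp [sphericalPoint]

theorem sphericalPoint_zero_add_pi (r θ : ℝ) :
    sphericalPoint r 0 (θ + π) = -sphericalPoint r 0 θ := by
  ext i; fin_cases i <;> simp [sphericalPoint]

theorem exists_mem_sphere_eq_zero_of_odd {g : EuclideanSpace ℝ (Fin 3) → ℂ} (hg : Continuous g)
    (hodd : ∀ x, g (-x) = -g x) {r : ℝ} (hr : 0 ≤ r) : ∃ x ∈ sphere 0 r, g x = 0 := by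
  by_contra! hg₀
  set F : ℝ × ℝ → ℂ := fun p ↦ g (sphericalPoint r p.1 p.2)
  have hF₀ : ∀ p, F p ≠ 0 := fun p ↦
    hg₀ _ (by rw [mem_sphere_zero_iff_norm, norm_sphericalPoint, abs_of_nonneg hr])
  obtain ⟨L, hL, hLF⟩ := exists_continuous_exp_eq (f := F)
    (hg.comp (continuous_sphericalPoint r)) hF₀
  have hwind : L (0, 2 * π) - L (0, 0) = L (π / 2, 2 * π) - L (π / 2, 0) := by
    have := eq_of_continuous_of_exp_eq_const (c := 1)
      (φ := fun p : ℝ × ℝ ↦ L (p.1, p.2 + 2 * π) - L p) (by fun_prop) (fun p ↦ ?_)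
      (0, 0) (π / 2, 0)
    · simpa only [zero_add] using this
    rw [Complex.exp_sub, hLF, hLF, div_eq_one_iff_eq (hF₀ p)]
    simp only [F, sphericalPoint_add_two_pi]
  have hpole : L (π / 2, 2 * π) = L (π / 2, 0) :=
    eq_of_continuous_of_exp_eq_const (c := F (π / 2, 0)) (φ := fun θ ↦ L (π / 2, θ))
      (by fun_prop) (fun θ ↦ by simp only [hLF, F, sphericalPoint_pi_div_two r θ 0]) _ _
  have hanti : ∀ θ, exp (L (0, θ + π) - L (0, θ)) = -1 := fun θ ↦ by
    rw [Complex.exp_sub, hLF, hLF, div_eq_iff (hF₀ _), neg_one_mul]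
    exact (congrArg g (sphericalPoint_zero_add_pi r θ)).trans (hodd _)
  have hhalf : L (0, π) - L (0, 0) = L (0, 2 * π) - L (0, π) := by
    have := eq_of_continuous_of_exp_eq_const (φ := fun θ ↦ L (0, θ + π) - L (0, θ))
      (by fun_prop) hanti 0 π
    rwa [zero_add, ← two_mul] at this
  have hzero : L (0, π) - L (0, 0) = 0 := by linear_combination (hhalf + hwind + hpole) / 2
  have := hanti 0
  rw [zero_add, hzero, Complex.exp_zero] at this
  norm_num at this

theorem exists_mem_sphere_map_neg_eq {f : EuclideanSpace ℝ (Fin 3) → ℂ} (hf : Continuous f)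
    {r : ℝ} (hr : 0 ≤ r) : ∃ x ∈ sphere 0 r, f (-x) = f x := by
  obtain ⟨x, hx, hx₀⟩ := exists_mem_sphere_eq_zero_of_odd (g := fun x ↦ f x - f (-x))
    (by fun_prop) (fun x ↦ by simp only [neg_neg, neg_sub]) hr
  exact ⟨x, hx, (sub_eq_zero.mp hx₀).symm⟩

theorem stmt_13_general (r : ℝ) (hr : 0 < r)
    (A B : Set (EuclideanSpace ℝ (Fin 3))) :
    ∃ x ∈ Metric.sphere (0 : EuclideanSpace ℝ (Fin 3)) r,
      Metric.infDist x A = Metric.infDist (-x) A ∧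
      Metric.infDist x B = Metric.infDist (-x) B := by
  obtain ⟨x, hx, hfx⟩ := exists_mem_sphere_map_neg_eq
    (f := fun y ↦ (infDist y A : ℂ) + infDist y B * I) (by fun_prop) hr.le
  refine ⟨x, hx, ?_, ?_⟩
  · simpa using congrArg re hfx.symm
  · simpa using congrArg im hfx.symm

theorem stmt_13 (r : ℝ) (hr : 0 < r)
    (A B : Set (EuclideanSpace ℝ (Fin 3)))
    (hA : A.Nonempty) (hB : B.Nonempty)
    (hAs : A ⊆ Metric.sphere (0 : EuclideanSpace ℝ (Fin 3)) r)
    (hBs : B ⊆ Metric.sphere (0 : EuclideanSpace ℝ (Fin 3)) r) :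
    ∃ x ∈ Metric.sphere (0 : EuclideanSpace ℝ (Fin 3)) r,
      Metric.infDist x A = Metric.infDist (-x) A ∧
      Metric.infDist x B = Metric.infDist (-x) B :=
  stmt_13_general r hr A B
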